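/- Fix p̂ ∈ Δ(V) with p̂_1 ≥ … ≥ p̂_d > 0 and ε with p̂_d ≤ ε < p̂_1. Let î = max{i : p̂_i > ε}, ŵ_i = ε / log(p̂_i/(p̂_i − ε)) for i ≤ î, and Î = max{I ≤ î : Σ_{i=1}^{I−1} ŵ_i log(p̂_i/p̂_I) ≤ ε}. Then the value of the one-step Decoding Game has the closed form: sup over q ∈ Δ(V) of inf over p ∈ N(p̂) of Σ_i q_i log p_i equals (Σ_{k=1}^{Î} ŵ_k log p̂_k − ε) / (Σ_{k=1}^{Î} ŵ_k), where infima and suprema are taken in the extended reals with the convention log 0 = −∞. -/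

import Mathlib

open Finset

noncomputable def elog (x : ℝ) : EReal := if x ≤ 0 then ⊥ else ((Real.log x : ℝ) : EReal)

def simplex (d : ℕ) : Set (Fin d → ℝ) := {p | (∀ i, 0 ≤ p i) ∧ ∑ i, p i = 1}

noncomputable def dTV {d : ℕ} (p q : Fin d → ℝ) : ℝ := (∑ i, |p i - q i|) / 2

def nbhd {d : ℕ} (phat : Fin d → ℝ) (ε : ℝ) : Set (Fin d → ℝ) :=
  {p | p ∈ simplex d ∧ dTV p phat ≤ ε}

noncomputable def obj {d : ℕ} (q p : Fin d → ℝ) : EReal :=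
  ∑ i, ((q i : ℝ) : EReal) * elog (p i)

/-- `ŵ_i = ε / log(p̂_i/(p̂_i − ε))`. -/
noncomputable def what {d : ℕ} (phat : Fin d → ℝ) (ε : ℝ) (i : Fin d) : ℝ :=
  ε / Real.log (phat i / (phat i - ε))

/-!
Write `S = {k ≤ Î}` and `V` for the claimed value. The maximiser guarantees `V` with
`q_k ∝ ŵ_k` on `S`: the minimiser removes masses `δ_k` with `∑ δ_k ≤ ε`, and since `ŵ_k` is the
inverse slope of the chord of `log` over `[p̂_k - ε, p̂_k]`, concavity bounds each loss
`ŵ_k (log p̂_k - log p_k)` by `δ_k`.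

Conversely, against any `q` the minimiser either empties a coordinate with `p̂_k ≤ ε` that `q`
charges (value `⊥`), or moves mass `ε` from the coordinate of `S` maximising
`q_k log (p̂_k / (p̂_k - ε))` onto the last one. The choice of `Î` gives `log p̂_k ≥ V` on `S` and
`log p̂_k ≤ V` for `Î < k ≤ î`, so `λ_k = ŵ_k (log p̂_k - V) / ε` is a probability vector on `S`,
and averaging against `λ` bounds the result by `V`.
-/

open Real

theorem EReal.coe_finset_sum {ι : Type*} (s : Finset ι) (f : ι → ℝ) :
    ((∑ i ∈ s, f i : ℝ) : EReal) = ∑ i ∈ s, ((f i : ℝ) : EReal) :=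
  map_sum (⟨⟨Real.toEReal, EReal.coe_zero⟩, EReal.coe_add⟩ : ℝ →+ EReal) f s

theorem log_sub_chord_le_log_sub {a δ ε : ℝ} (hδ : 0 ≤ δ) (hδε : δ ≤ ε) (hε : 0 < ε)
    (hεa : ε < a) : log a - δ / ε * log (a / (a - ε)) ≤ log (a - δ) := by
  have ha : 0 < a := hε.trans hεa
  have haε : 0 < a - ε := sub_pos.2 hεa
  have hθ : δ / ε ≤ 1 := (div_le_one hε).2 hδε
  have h := strictConcaveOn_log_Ioi.concaveOn.2 (Set.mem_Ioi.2 ha) (Set.mem_Ioi.2 haε)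
    (sub_nonneg.2 hθ) (by positivity) (sub_add_cancel 1 (δ / ε))
  have hmid : (1 - δ / ε) • a + (δ / ε) • (a - ε) = a - δ := by
    simp only [smul_eq_mul]; field_simp; ring
  rw [hmid, smul_eq_mul, smul_eq_mul] at h
  rw [log_div ha.ne' haε.ne']
  linarith

/-- With `λ i = w i * (a i - V) / ε`, a probability vector on `S` with `λ i * L i = a i - V`,
the left side is a `λ`-average of the `q i * L i`. -/
theorem sum_mul_sub_le_of_forall_mul_le {ι : Type*} {S : Finset ι} {w a L q : ι → ℝ} {ε V M : ℝ}
    (hε : 0 < ε) (hw : ∀ i ∈ S, 0 ≤ w i) (hwL : ∀ i ∈ S, w i * L i = ε)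
    (hVa : ∀ i ∈ S, V ≤ a i) (hV : ∑ i ∈ S, w i * (a i - V) = ε)
    (hM : ∀ i ∈ S, q i * L i ≤ M) : ∑ i ∈ S, q i * (a i - V) ≤ M := by
  calc ∑ i ∈ S, q i * (a i - V) = ∑ i ∈ S, w i * (a i - V) / ε * (q i * L i) :=
        sum_congr rfl fun i hi => by
          rw [show w i * (a i - V) / ε * (q i * L i) = q i * (a i - V) * (w i * L i) / ε by ring,
            hwL i hi, mul_div_cancel_right₀ _ hε.ne']
    _ ≤ ∑ i ∈ S, w i * (a i - V) / ε * M := sum_le_sum fun i hi =>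
        mul_le_mul_of_nonneg_left (hM i hi)
          (div_nonneg (mul_nonneg (hw i hi) (sub_nonneg.2 (hVa i hi))) hε.le)
    _ = M := by rw [← sum_mul, ← sum_div, hV, div_self hε.ne', one_mul]

theorem sum_mul_le_sum_mul_sub_add {ι : Type*} [Fintype ι] {S : Finset ι} {q a : ι → ℝ} {V : ℝ}
    (hq0 : ∀ i, 0 ≤ q i) (hq1 : ∑ i, q i = 1) (haV : ∀ i ∉ S, q i ≠ 0 → a i ≤ V) :
    ∑ i, q i * a i ≤ ∑ i ∈ S, q i * (a i - V) + V := by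
  classical
  rw [← sum_add_sum_compl S] at hq1 ⊢
  have hcompl : ∑ i ∈ Sᶜ, q i * a i ≤ (∑ i ∈ Sᶜ, q i) * V := by
    rw [sum_mul]
    refine sum_le_sum fun i hi => ?_
    rcases eq_or_ne (q i) 0 with h | h
    · simp [h]
    · exact mul_le_mul_of_nonneg_left (haV i (mem_compl.1 hi) h) (hq0 i)
  have hS : ∑ i ∈ S, q i * (a i - V) = ∑ i ∈ S, q i * a i - (∑ i ∈ S, q i) * V := by
    rw [sum_mul, ← sum_sub_distrib]
    exact sum_congr rfl fun i _ => mul_sub _ _ _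
  have hV : V = (∑ i ∈ S, q i) * V + (∑ i ∈ Sᶜ, q i) * V := by rw [← add_mul, hq1, one_mul]
  linarith

section DecodingGame

variable {d : ℕ}

theorem obj_eq_coe_sum {q p : Fin d → ℝ} (h : ∀ i, q i = 0 ∨ 0 < p i) :
    obj q p = ((∑ i, q i * log (p i) : ℝ) : EReal) := by
  rw [obj, EReal.coe_finset_sum]
  refine sum_congr rfl fun i _ => ?_
  rcases h i with hq | hp
  · simp [hq]
  · rw [elog, if_neg hp.not_ge, EReal.coe_mul]

theorem obj_eq_bot {q p : Fin d → ℝ} {j : Fin d} (hq : 0 < q j) (hp : p j ≤ 0) :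
    obj q p = ⊥ := by
  rw [obj, ← add_sum_erase _ _ (mem_univ j), elog, if_pos hp, EReal.coe_mul_bot_of_pos hq,
    EReal.bot_add]

theorem sum_max_sub_zero_eq_dTV {p q : Fin d → ℝ} (h : ∑ i, p i = ∑ i, q i) :
    ∑ i, max (q i - p i) 0 = dTV p q := by
  have hmax : ∀ i, max (q i - p i) 0 = ((q i - p i) + |p i - q i|) / 2 := by
    intro i
    rw [abs_sub_comm]
    rcases le_total (q i - p i) 0 with h' | h'
    · rw [max_eq_right h', abs_of_nonpos h']; ring
    · rw [max_eq_left h', abs_of_nonneg h']; ring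
  simp_rw [hmax]
  rw [← sum_div, sum_add_distrib, sum_sub_distrib, h, sub_self, zero_add, dTV]

def moveMass (p : Fin d → ℝ) (a b : Fin d) (δ : ℝ) : Fin d → ℝ :=
  p + Pi.single b δ - Pi.single a δ

theorem moveMass_apply_source {p : Fin d → ℝ} {a b : Fin d} (hab : a ≠ b) (δ : ℝ) :
    moveMass p a b δ a = p a - δ := by
  simp [moveMass, hab]

theorem moveMass_apply_of_ne {p : Fin d → ℝ} {a b k : Fin d} (hka : k ≠ a) (hkb : k ≠ b)
    (δ : ℝ) : moveMass p a b δ k = p k := by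
  simp [moveMass, hka, hkb]

theorem le_moveMass_apply {p : Fin d → ℝ} {a b k : Fin d} (hka : k ≠ a) {δ : ℝ} (hδ : 0 ≤ δ) :
    p k ≤ moveMass p a b δ k := by
  by_cases hkb : k = b
  · subst hkb; simp [moveMass, hka, hδ]
  · rw [moveMass_apply_of_ne hka hkb]

theorem moveMass_mem_nbhd {p : Fin d → ℝ} (hp : p ∈ simplex d) {a b : Fin d} (hab : a ≠ b)
    {δ ε : ℝ} (hδ : 0 ≤ δ) (hδa : δ ≤ p a) (hδε : δ ≤ ε) : moveMass p a b δ ∈ nbhd p ε := by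
  refine ⟨⟨fun k => ?_, ?_⟩, ?_⟩
  · by_cases hka : k = a
    · subst hka; rw [moveMass_apply_source hab]; linarith
    · exact (hp.1 k).trans (le_moveMass_apply hka hδ)
  · simp [moveMass, sum_add_distrib, sum_sub_distrib, hp.2]
  · have habs : ∀ k, |moveMass p a b δ k - p k| =
        (Pi.single b δ : Fin d → ℝ) k + (Pi.single a δ : Fin d → ℝ) k := by
      intro k
      by_cases hka : k = a
      · subst hka; simp [moveMass, hab, abs_of_nonneg hδ]
      · by_cases hkb : k = b
        · subst hkb; simp [moveMass, hka, abs_of_nonneg hδ]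
        · simp [moveMass, hka, hkb]
    simp only [dTV, habs, sum_add_distrib, sum_pi_single', mem_univ, if_true]
    linarith

noncomputable def gameValue (phat : Fin d → ℝ) (ε : ℝ) (S : Finset (Fin d)) : ℝ :=
  ((∑ k ∈ S, what phat ε k * log (phat k)) - ε) / ∑ k ∈ S, what phat ε k

noncomputable def optStrategy (phat : Fin d → ℝ) (ε : ℝ) (S : Finset (Fin d)) : Fin d → ℝ :=
  fun i => if i ∈ S then what phat ε i / ∑ k ∈ S, what phat ε k else 0

variable {phat : Fin d → ℝ} {ε : ℝ}

theorem log_div_sub_pos {i : Fin d} (hε : 0 < ε) (hi : ε < phat i) :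
    0 < log (phat i / (phat i - ε)) :=
  log_pos ((one_lt_div (by linarith)).2 (by linarith))

theorem what_pos {i : Fin d} (hε : 0 < ε) (hi : ε < phat i) : 0 < what phat ε i :=
  div_pos hε (log_div_sub_pos hε hi)

theorem what_mul_log_div {i : Fin d} (hε : 0 < ε) (hi : ε < phat i) :
    what phat ε i * log (phat i / (phat i - ε)) = ε :=
  div_mul_cancel₀ ε (log_div_sub_pos hε hi).ne'

theorem sum_what_pos {S : Finset (Fin d)} (hε : 0 < ε) (hS : S.Nonempty)
    (hSε : ∀ i ∈ S, ε < phat i) : 0 < ∑ k ∈ S, what phat ε k :=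
  sum_pos (fun i hi => what_pos hε (hSε i hi)) hS

theorem sum_what_mul_log_sub {S : Finset (Fin d)} (hW : ∑ k ∈ S, what phat ε k ≠ 0) (b : ℝ) :
    ∑ k ∈ S, what phat ε k * (log (phat k) - b)
      = ε + (gameValue phat ε S - b) * ∑ k ∈ S, what phat ε k := by
  simp only [gameValue, sub_mul, div_mul_cancel₀ _ hW, mul_sub, sum_sub_distrib, ← sum_mul]
  ring

theorem sum_what_mul_log_div_le_iff {S : Finset (Fin d)} (hpos : ∀ i ∈ S, 0 < phat i)
    {c : ℝ} (hc : 0 < c) (hW : 0 < ∑ k ∈ S, what phat ε k) :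
    ∑ k ∈ S, what phat ε k * log (phat k / c) ≤ ε ↔ gameValue phat ε S ≤ log c := by
  have hsum : ∑ k ∈ S, what phat ε k * log (phat k / c)
      = ∑ k ∈ S, what phat ε k * (log (phat k) - log c) :=
    sum_congr rfl fun k hk => by rw [log_div (hpos k hk).ne' hc.ne']
  rw [hsum, sum_what_mul_log_sub hW.ne', add_le_iff_nonpos_right,
    ← not_lt, mul_pos_iff_of_pos_right hW, not_lt, sub_nonpos]

theorem what_mul_log_sub_le {i : Fin d} (hε : 0 < ε) (hi : ε < phat i) {δ x : ℝ}
    (hδ : 0 ≤ δ) (hδε : δ ≤ ε) (hx : phat i - δ ≤ x) :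
    what phat ε i * log (phat i) - δ ≤ what phat ε i * log x := by
  have hlog : log (phat i) - δ / ε * log (phat i / (phat i - ε)) ≤ log x :=
    (log_sub_chord_le_log_sub hδ hδε hε hi).trans (log_le_log (by linarith) hx)
  have hδ' : what phat ε i * (δ / ε * log (phat i / (phat i - ε))) = δ := by
    rw [mul_left_comm, what_mul_log_div hε hi, div_mul_cancel₀ δ hε.ne']
  calc what phat ε i * log (phat i) - δ
      = what phat ε i * (log (phat i) - δ / ε * log (phat i / (phat i - ε))) := by
        rw [mul_sub, hδ']
    _ ≤ what phat ε i * log x := mul_le_mul_of_nonneg_left hlog (what_pos hε hi).le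

theorem optStrategy_mem_simplex {S : Finset (Fin d)} (hε : 0 < ε) (hS : S.Nonempty)
    (hSε : ∀ i ∈ S, ε < phat i) : optStrategy phat ε S ∈ simplex d := by
  have hW := sum_what_pos hε hS hSε
  refine ⟨fun i => ?_, ?_⟩
  · unfold optStrategy
    split_ifs with hi
    · exact div_nonneg (what_pos hε (hSε i hi)).le hW.le
    · exact le_rfl
  · simp only [optStrategy, sum_ite_mem, univ_inter, ← sum_div, div_self hW.ne']

theorem gameValue_le_obj_optStrategy {S : Finset (Fin d)} (hphat : ∑ i, phat i = 1)
    (hε : 0 < ε) (hS : S.Nonempty) (hSε : ∀ i ∈ S, ε < phat i) {p : Fin d → ℝ}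
    (hp : p ∈ nbhd phat ε) : (gameValue phat ε S : EReal) ≤ obj (optStrategy phat ε S) p := by
  obtain ⟨⟨-, hp1⟩, hpε⟩ := hp
  have hW := sum_what_pos hε hS hSε
  set δ : Fin d → ℝ := fun i => max (phat i - p i) 0
  have hδ0 : ∀ i, 0 ≤ δ i := fun i => le_max_right _ _
  have hδsum : ∑ i, δ i ≤ ε := (sum_max_sub_zero_eq_dTV (hp1.trans hphat.symm)).trans_le hpε
  have hδε : ∀ i, δ i ≤ ε := fun i =>
    (single_le_sum (fun j _ => hδ0 j) (mem_univ i)).trans hδsum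
  have hpδ : ∀ i, phat i - δ i ≤ p i := fun i => by
    linarith [le_max_left (phat i - p i) 0]
  have hsupp : ∀ i, optStrategy phat ε S i = 0 ∨ 0 < p i := by
    intro i
    by_cases hi : i ∈ S
    · exact Or.inr (by linarith [hSε i hi, hδε i, hpδ i])
    · exact Or.inl (if_neg hi)
  rw [obj_eq_coe_sum hsupp, EReal.coe_le_coe_iff]
  simp only [optStrategy, ite_mul, zero_mul, sum_ite_mem, univ_inter, div_mul_eq_mul_div,
    ← sum_div, gameValue]
  refine div_le_div_of_nonneg_right ?_ hW.le
  calc ∑ k ∈ S, what phat ε k * log (phat k) - ε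
      ≤ ∑ k ∈ S, what phat ε k * log (phat k) - ∑ k ∈ S, δ k := by
        gcongr
        exact (sum_le_sum_of_subset_of_nonneg (subset_univ S) fun j _ _ => hδ0 j).trans hδsum
    _ = ∑ k ∈ S, (what phat ε k * log (phat k) - δ k) := (sum_sub_distrib _ _).symm
    _ ≤ ∑ k ∈ S, what phat ε k * log (p k) := sum_le_sum fun k hk =>
        what_mul_log_sub_le hε (hSε k hk) (hδ0 k) (hδε k) (hpδ k)

theorem obj_moveMass {q : Fin d → ℝ} (hpos : ∀ k, 0 < phat k) {i ℓ : Fin d} (hiℓ : i ≠ ℓ)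
    (hqℓ : q ℓ = 0) (hε : 0 ≤ ε) (hi : ε < phat i) :
    obj q (moveMass phat i ℓ ε)
      = ((∑ k, q k * log (phat k) - q i * log (phat i / (phat i - ε)) : ℝ) : EReal) := by
  have hmpos : ∀ k, 0 < moveMass phat i ℓ ε k := fun k => by
    by_cases hk : k = i
    · subst hk; rw [moveMass_apply_source hiℓ]; linarith
    · exact (hpos k).trans_le (le_moveMass_apply hk hε)
  have hdiff : ∑ k, q k * log (moveMass phat i ℓ ε k) - ∑ k, q k * log (phat k)
      = -(q i * log (phat i / (phat i - ε))) := by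
    rw [← sum_sub_distrib, sum_eq_single i]
    · rw [moveMass_apply_source hiℓ, log_div (hpos i).ne' (sub_pos.2 hi).ne']
      ring
    · intro k _ hki
      by_cases hkℓ : k = ℓ
      · simp [hkℓ, hqℓ]
      · rw [moveMass_apply_of_ne hki hkℓ, sub_self]
    · simp
  rw [obj_eq_coe_sum fun k => Or.inr (hmpos k)]
  congr 1
  linarith

theorem iInf_obj_le_gameValue {S : Finset (Fin d)} (hphat : phat ∈ simplex d)
    (hpos : ∀ i, 0 < phat i) (hε : 0 < ε) {ℓ : Fin d} (hℓ : phat ℓ ≤ ε) (hS : S.Nonempty)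
    (hSε : ∀ i ∈ S, ε < phat i) (hVle : ∀ i ∈ S, gameValue phat ε S ≤ log (phat i))
    (hleV : ∀ k ∉ S, ε < phat k → log (phat k) ≤ gameValue phat ε S)
    {q : Fin d → ℝ} (hq : q ∈ simplex d) :
    ⨅ p ∈ nbhd phat ε, obj q p ≤ (gameValue phat ε S : EReal) := by
  by_cases hbot : ∃ j, phat j ≤ ε ∧ 0 < q j
  · obtain ⟨j, hjε, hqj⟩ := hbot
    obtain ⟨i, hi⟩ := hS
    have hji : j ≠ i := fun h => (hSε i hi).not_ge (h ▸ hjε)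
    refine iInf₂_le_of_le _ (moveMass_mem_nbhd hphat hji (hpos j).le le_rfl hjε) ?_
    rw [obj_eq_bot hqj (by rw [moveMass_apply_source hji, sub_self])]
    exact bot_le
  · simp only [not_exists, not_and, not_lt] at hbot
    have hqzero : ∀ k, phat k ≤ ε → q k = 0 := fun k hk => le_antisymm (hbot k hk) (hq.1 k)
    obtain ⟨i, hi, hmax⟩ := S.exists_max_image (fun i => q i * log (phat i / (phat i - ε))) hS
    have hiℓ : i ≠ ℓ := fun h => (hSε i hi).not_ge (h ▸ hℓ)
    refine iInf₂_le_of_le _ (moveMass_mem_nbhd hphat hiℓ hε.le (hSε i hi).le le_rfl) ?_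
    rw [obj_moveMass hpos hiℓ (hqzero ℓ hℓ) hε.le (hSε i hi), EReal.coe_le_coe_iff]
    have hW := sum_what_pos hε hS hSε
    have hS_part := sum_mul_sub_le_of_forall_mul_le hε
      (fun k hk => (what_pos hε (hSε k hk)).le) (fun k hk => what_mul_log_div hε (hSε k hk))
      hVle (by rw [sum_what_mul_log_sub hW.ne', sub_self, zero_mul, add_zero]) hmax
    have hcompl_part := sum_mul_le_sum_mul_sub_add hq.1 hq.2 fun k hk hqk =>
      hleV k hk (not_le.1 fun h => hqk (hqzero k h))
    linarith

theorem lt_apply_of_mem_filter_le (hanti : Antitone phat) {I : Fin d} (hIε : ε < phat I) :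
    ∀ i ∈ univ.filter (· ≤ I), ε < phat i :=
  fun _ hi => hIε.trans_le (hanti (mem_filter.1 hi).2)

theorem gameValue_le_log_of_sum_le (hpos : ∀ i, 0 < phat i) (hanti : Antitone phat)
    (hε : 0 < ε) {I : Fin d} (hIε : ε < phat I)
    (hcond : ∑ i ∈ univ.filter (· < I), what phat ε i * log (phat i / phat I) ≤ ε) :
    ∀ i ∈ univ.filter (· ≤ I), gameValue phat ε (univ.filter (· ≤ I)) ≤ log (phat i) := by
  have hW := sum_what_pos hε ⟨I, by simp⟩ (lt_apply_of_mem_filter_le hanti hIε)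
  have hsum : ∑ i ∈ univ.filter (· < I), what phat ε i * log (phat i / phat I)
      = ∑ i ∈ univ.filter (· ≤ I), what phat ε i * log (phat i / phat I) := by
    refine sum_subset (fun i hi => by simpa using (mem_filter.1 hi).2.le) fun i hi hni => ?_
    obtain rfl : i = I := le_antisymm (mem_filter.1 hi).2 (by simpa using hni)
    rw [div_self (hpos i).ne', log_one, mul_zero]
  rw [hsum, sum_what_mul_log_div_le_iff (fun k _ => hpos k) (hpos I) hW] at hcond
  exact fun i hi => hcond.trans (log_le_log (hpos I) (hanti (mem_filter.1 hi).2))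

theorem log_le_gameValue_of_lt (hpos : ∀ i, 0 < phat i) (hanti : Antitone phat)
    (hε : 0 < ε) {I k : Fin d} (hIε : ε < phat I) (hIk : I < k)
    (hmax : ∀ J : Fin d, J ≤ k →
      (∑ i ∈ univ.filter (· < J), what phat ε i * log (phat i / phat J) ≤ ε) → J ≤ I) :
    log (phat k) ≤ gameValue phat ε (univ.filter (· ≤ I)) := by
  have hW := sum_what_pos hε ⟨I, by simp⟩ (lt_apply_of_mem_filter_le hanti hIε)
  have hIk' : (I : ℕ) < k := hIk
  let J : Fin d := ⟨I + 1, by omega⟩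
  have hJk : J ≤ k := Fin.le_def.2 hIk'
  have hJ : univ.filter (· < J) = univ.filter (· ≤ I) := by
    ext i
    simp only [mem_filter, mem_univ, true_and, Fin.lt_def, Fin.le_def, J]
    omega
  have hcond : ¬ ∑ i ∈ univ.filter (· < J), what phat ε i * log (phat i / phat J) ≤ ε :=
    fun h => absurd (Fin.le_def.1 (hmax J hJk h)) (by simp [J])
  rw [hJ, sum_what_mul_log_div_le_iff (fun k _ => hpos k) (hpos J) hW, not_le] at hcond
  exact (log_le_log (hpos k) (hanti hJk)).trans hcond.le

end DecodingGame

/-- closed form of the value of the one-step Decoding Game. -/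
theorem stmt14 {d : ℕ} (hd : 0 < d) (phat : Fin d → ℝ) (ε : ℝ)
    (hmem : phat ∈ simplex d)
    (hpos : ∀ i, 0 < phat i)
    (hsort : ∀ i j : Fin d, i ≤ j → phat j ≤ phat i)
    (heps_lo : phat ⟨d - 1, by omega⟩ ≤ ε)
    (ihat : Fin d)
    (hihat1 : ε < phat ihat)
    (hihat2 : ∀ i : Fin d, ε < phat i → i ≤ ihat)
    (Ihat : Fin d)
    (hIhat_le : Ihat ≤ ihat)
    (hIhat_cond : ∑ i ∈ univ.filter (· < Ihat),
        what phat ε i * Real.log (phat i / phat Ihat) ≤ ε)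
    (hIhat_max : ∀ I : Fin d, I ≤ ihat →
        (∑ i ∈ univ.filter (· < I), what phat ε i * Real.log (phat i / phat I) ≤ ε) →
        I ≤ Ihat) :
    ⨆ q ∈ simplex d, ⨅ p ∈ nbhd phat ε, obj q p
      = ((((∑ k ∈ univ.filter (· ≤ Ihat), what phat ε k * Real.log (phat k)) - ε)
          / ∑ k ∈ univ.filter (· ≤ Ihat), what phat ε k : ℝ) : EReal) := by
  change _ = (gameValue phat ε (univ.filter (· ≤ Ihat)) : EReal)
  have hε : 0 < ε := (hpos _).trans_le heps_lo
  have hanti : Antitone phat := fun i j h => hsort i j h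
  have hIε : ε < phat Ihat := hihat1.trans_le (hanti hIhat_le)
  have hS : (univ.filter (· ≤ Ihat)).Nonempty := ⟨Ihat, by simp⟩
  have hSε := lt_apply_of_mem_filter_le hanti hIε
  have hVle := gameValue_le_log_of_sum_le hpos hanti hε hIε hIhat_cond
  have hleV : ∀ k ∉ univ.filter (· ≤ Ihat), ε < phat k →
      log (phat k) ≤ gameValue phat ε (univ.filter (· ≤ Ihat)) := fun k hk hkε =>
    log_le_gameValue_of_lt hpos hanti hε hIε (by simpa using hk)
      fun J hJ => hIhat_max J (hJ.trans (hihat2 k hkε))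
  exact le_antisymm
    (iSup₂_le fun q hq => iInf_obj_le_gameValue hmem hpos hε heps_lo hS hSε hVle hleV hq)
    (le_iSup₂_of_le _ (optStrategy_mem_simplex hε hS hSε)
      (le_iInf₂ fun p hp => gameValue_le_obj_optStrategy hmem.2 hε hS hSε hp))
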